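/- arXiv:2511.19323 — 7 statements merged into one kernel-verified Lean document; each statement's English description precedes it below -/
import Mathlib

section
/- A collection Φ of subsets of [n] is minimal balanced (balanced with no proper balanced subcollection) if and only if the system of balancing weights is unique; in particular, if Φ is minimal balanced, then the matrix whose columns are the characteristic vectors of the sets in Φ has full column rank and the unique weight vector has all coordinates strictly positive. -/
/-- The characteristic vector of a subset `S` of `[n]`. -/
def charVec (n : ℕ) (S : Finset (Fin n)) : Fin n → ℝ :=
  fun i => if i ∈ S then 1 else 0

/-- A collection `Φ` of subsets of `[n]` is balanced if there are strictly positive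
weights `λ_S`, `S ∈ Φ`, with `∑ λ_S 𝟙_S = 𝟙`. -/
def IsBalancedColl (n : ℕ) (Φ : Finset (Finset (Fin n))) : Prop :=
  ∃ w : Finset (Fin n) → ℝ, (∀ S ∈ Φ, 0 < w S) ∧
    ∀ i, ∑ S ∈ Φ, w S * charVec n S i = 1

/-- `Φ` is minimal balanced if it is balanced and no proper subcollection is balanced. -/
def MinimalBalanced (n : ℕ) (Φ : Finset (Finset (Fin n))) : Prop :=
  IsBalancedColl n Φ ∧ ∀ Ψ : Finset (Finset (Fin n)), Ψ ⊂ Φ → ¬ IsBalancedColl n Ψ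

/-- Key lemma: if `Φ` has a strictly positive balancing system `lam` and there is a
vector `d` in the kernel of the characteristic-vector matrix which is nonzero at some
member of `Φ`, then some proper subcollection of `Φ` is balanced. -/
lemma key_lemma (n : ℕ) (Φ : Finset (Finset (Fin n))) (lam d : Finset (Fin n) → ℝ)
    (hpos : ∀ S ∈ Φ, 0 < lam S)
    (hsum : ∀ i, ∑ S ∈ Φ, lam S * charVec n S i = 1)
    (S₀ : Finset (Fin n)) (hS₀ : S₀ ∈ Φ) (hd0 : d S₀ ≠ 0)
    (hdsum : ∀ i, ∑ S ∈ Φ, d S * charVec n S i = 0) :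
    ∃ Ψ, Ψ ⊂ Φ ∧ IsBalancedColl n Ψ := by
  obtain ⟨S₁, hS₁, hmin⟩ := Finset.exists_min_image (Φ.filter fun S => d S ≠ 0)
    (fun S => lam S / |d S|) ⟨S₀, by simp [hS₀, hd0]⟩
  rw [Finset.mem_filter] at hS₁
  obtain ⟨hS₁Φ, hdS₁⟩ := hS₁
  set t : ℝ := -(lam S₁ / d S₁) with ht
  set w : Finset (Fin n) → ℝ := fun S => lam S + t * d S with hw
  have habs : |t| = lam S₁ / |d S₁| := by
    rw [ht, abs_neg, abs_div, abs_of_nonneg (hpos S₁ hS₁Φ).le]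
  have h1 : w S₁ = 0 := by
    simp only [hw, ht]
    field_simp
    ring
  have hnn : ∀ S ∈ Φ, 0 ≤ w S := by
    intro S hS
    by_cases hdS : d S = 0
    · simp [hw, hdS]; exact (hpos S hS).le
    · have h2 : |t * d S| ≤ lam S := by
        rw [abs_mul, habs]
        have h3 := hmin S (by simp [hS, hdS])
        have h4 : (0:ℝ) < |d S| := abs_pos.mpr hdS
        calc lam S₁ / |d S₁| * |d S| ≤ lam S / |d S| * |d S| := by
              exact mul_le_mul_of_nonneg_right h3 h4.le
          _ = lam S := by field_simp
      have := neg_abs_le (t * d S)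
      simp only [hw]
      linarith
  have hweq : ∀ i, ∑ S ∈ Φ, w S * charVec n S i = 1 := by
    intro i
    simp only [hw, add_mul, Finset.sum_add_distrib, hsum, mul_assoc, ← Finset.mul_sum,
      hdsum, mul_zero, add_zero]
  refine ⟨Φ.filter (fun S => w S ≠ 0), ?_, w, ?_, ?_⟩
  · rw [Finset.ssubset_iff_of_subset (Finset.filter_subset _ _)]
    exact ⟨S₁, hS₁Φ, by simp [h1]⟩
  · intro S hS
    rw [Finset.mem_filter] at hS
    exact lt_of_le_of_ne (hnn S hS.1) (Ne.symm hS.2)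
  · intro i
    rw [Finset.sum_filter_of_ne, hweq i]
    intro S hS h h0
    exact h (by simp [h0])

theorem stmt0 (n : ℕ) (Φ : Finset (Finset (Fin n))) :
    (MinimalBalanced n Φ ↔
      (IsBalancedColl n Φ ∧
        ∃! w : Finset (Fin n) → ℝ,
          (∀ S, S ∉ Φ → w S = 0) ∧ (∀ S ∈ Φ, 0 ≤ w S) ∧
            ∀ i, ∑ S ∈ Φ, w S * charVec n S i = 1)) ∧
    (MinimalBalanced n Φ →
      (LinearIndependent ℝ (fun S : {S // S ∈ Φ} => charVec n S.1) ∧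
        ∀ w : Finset (Fin n) → ℝ,
          ((∀ S, S ∉ Φ → w S = 0) ∧ (∀ S ∈ Φ, 0 ≤ w S) ∧
            ∀ i, ∑ S ∈ Φ, w S * charVec n S i = 1) →
          ∀ S ∈ Φ, 0 < w S)) := by
  -- From a minimal balanced collection, extract the canonical positive weight
  -- system supported on `Φ`, and prove it is the unique nonnegative weight system.
  have main : ∀ (h : MinimalBalanced n Φ),
      ∃ lam : Finset (Fin n) → ℝ,
        ((∀ S, S ∉ Φ → lam S = 0) ∧ (∀ S ∈ Φ, 0 < lam S) ∧
          ∀ i, ∑ S ∈ Φ, lam S * charVec n S i = 1) ∧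
        ∀ w : Finset (Fin n) → ℝ,
          ((∀ S, S ∉ Φ → w S = 0) ∧ (∀ S ∈ Φ, 0 ≤ w S) ∧
            ∀ i, ∑ S ∈ Φ, w S * charVec n S i = 1) → w = lam := by
    intro h
    obtain ⟨⟨lam0, hlam0pos, hlam0sum⟩, hmin⟩ := h
    set lam : Finset (Fin n) → ℝ := fun S => if S ∈ Φ then lam0 S else 0 with hlam
    have hlampos : ∀ S ∈ Φ, 0 < lam S := by
      intro S hS; simp only [hlam, if_pos hS]; exact hlam0pos S hS
    have hlamsum : ∀ i, ∑ S ∈ Φ, lam S * charVec n S i = 1 := by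
      intro i
      rw [← hlam0sum i]
      refine Finset.sum_congr rfl fun S hS => ?_
      simp [hlam, hS]
    refine ⟨lam, ⟨fun S hS => by simp [hlam, hS], hlampos, hlamsum⟩, ?_⟩
    intro w ⟨hw0, hwnn, hwsum⟩
    by_contra hne
    obtain ⟨S₀, hS₀⟩ : ∃ S₀, w S₀ - lam S₀ ≠ 0 := by
      by_contra hc
      push_neg at hc
      exact hne (funext fun S => by linarith [hc S])
    have hS₀Φ : S₀ ∈ Φ := by
      by_contra hc
      exact hS₀ (by simp [hw0 S₀ hc, hlam, hc])
    obtain ⟨Ψ, hΨ, hΨbal⟩ := key_lemma n Φ lam (fun S => w S - lam S)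
      hlampos hlamsum S₀ hS₀Φ hS₀
      (fun i => by
        simp only [sub_mul, Finset.sum_sub_distrib, hwsum i, hlamsum i, sub_self])
    exact hmin Ψ hΨ hΨbal
  constructor
  · constructor
    · intro h
      obtain ⟨lam, ⟨hlam0, hlampos, hlamsum⟩, huniq⟩ := main h
      exact ⟨h.1, lam, ⟨hlam0, fun S hS => (hlampos S hS).le, hlamsum⟩, huniq⟩
    · rintro ⟨hbal, lam, ⟨hlam0, hlamnn, hlamsum⟩, huniq⟩
      refine ⟨hbal, fun Ψ hΨ hΨbal => ?_⟩
      obtain ⟨mu0, hmupos, hmusum⟩ := hΨbal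
      obtain ⟨lam0, hlam0pos, hlam0sum⟩ := hbal
      set lam' : Finset (Fin n) → ℝ := fun S => if S ∈ Φ then lam0 S else 0 with hlam'
      set mu : Finset (Fin n) → ℝ := fun S => if S ∈ Ψ then mu0 S else 0 with hmu
      have hΨsub := hΨ.subset
      have hmueq : mu = lam := by
        refine huniq mu ⟨fun S hS => by have h' : S ∉ Ψ := fun h => hS (hΨsub h); simp [hmu, h'], ?_, ?_⟩
        · intro S hS
          by_cases h : S ∈ Ψ
          · simp only [hmu, if_pos h]; exact (hmupos S h).le
          · simp [hmu, h]
        · intro i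
          rw [← hmusum i]
          rw [← Finset.sum_subset hΨsub]
          · exact Finset.sum_congr rfl fun S hS => by simp [hmu, hS]
          · intro S hS hSΨ
            simp [hmu, hSΨ]
      have hlameq : lam' = lam := by
        refine huniq lam' ⟨fun S hS => by simp [hlam', hS], ?_, ?_⟩
        · intro S hS
          simp only [hlam', if_pos hS]; exact (hlam0pos S hS).le
        · intro i
          rw [← hlam0sum i]
          exact Finset.sum_congr rfl fun S hS => by simp [hlam', hS]
      obtain ⟨S₀, hS₀Φ, hS₀Ψ⟩ := Finset.exists_of_ssubset hΨ
      have h1 : mu S₀ = 0 := by simp [hmu, hS₀Ψ]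
      have h2 : (0:ℝ) < lam' S₀ := by
        simp only [hlam', if_pos hS₀Φ]; exact hlam0pos S₀ hS₀Φ
      rw [hmueq] at h1; rw [hlameq] at h2
      exact absurd h1 (ne_of_gt h2)
  · intro h
    obtain ⟨lam, ⟨hlam0, hlampos, hlamsum⟩, huniq⟩ := main h
    constructor
    · rw [Fintype.linearIndependent_iff]
      intro g hg
      by_contra hc
      push_neg at hc
      obtain ⟨⟨S₀, hS₀Φ⟩, hgS₀⟩ := hc
      set d : Finset (Fin n) → ℝ := fun S => if hS : S ∈ Φ then g ⟨S, hS⟩ else 0 with hd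
      have hdsum : ∀ i, ∑ S ∈ Φ, d S * charVec n S i = 0 := by
        intro i
        have := congrFun hg i
        simp only [Finset.sum_apply, Pi.smul_apply, smul_eq_mul, Pi.zero_apply] at this
        rw [← this, ← Finset.sum_coe_sort Φ (fun S => d S * charVec n S i)]
        exact Finset.sum_congr rfl fun ⟨S, hS⟩ _ => by simp [hd, hS]
      have hdS₀ : d S₀ ≠ 0 := by simpa [hd, hS₀Φ] using hgS₀
      obtain ⟨Ψ, hΨ, hΨbal⟩ := key_lemma n Φ lam d hlampos hlamsum S₀ hS₀Φ hdS₀ hdsum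
      exact h.2 Ψ hΨ hΨbal
    · intro w hw S hS
      rw [huniq w hw]
      exact hlampos S hS
end

section
/- Let M be an n×m (0,1)-matrix of rank m with unique solution λ of Mλ = 𝟙, all coordinates of λ nonzero. Let I ⊆ [m] with Σ_{i∈I} λ_i < 1, and let z_I(M) be the matrix obtained from M by replacing each column i ∈ I by 𝟙 − (that column). Then z_I(M) has rank m, and its unique solution λ' of z_I(M)λ' = 𝟙 is given by λ'_i = λ_i/(1 − Σ_{j∈I} λ_j) for i ∉ I and λ'_i = −λ_i/(1 − Σ_{j∈I} λ_j) for i ∈ I; in particular the signs of the coordinates indexed by I are inverted and the others are preserved. -/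
def zI {n m : ℕ} (M : Matrix (Fin n) (Fin m) ℝ) (I : Finset (Fin m)) :
    Matrix (Fin n) (Fin m) ℝ :=
  fun i j => if j ∈ I then 1 - M i j else M i j

lemma rank_eq_iff_inj {n m : ℕ} (M : Matrix (Fin n) (Fin m) ℝ) :
    M.rank = m ↔ Function.Injective M.mulVec := by
  have hrn := LinearMap.finrank_range_add_finrank_ker M.mulVecLin
  rw [Module.finrank_fintype_fun_eq_card, Fintype.card_fin] at hrn
  have h1 : Function.Injective M.mulVec ↔ LinearMap.ker M.mulVecLin = ⊥ := by
    rw [LinearMap.ker_eq_bot]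
    constructor <;> (intro h; convert h using 1; rfl)
  rw [Matrix.rank, h1]
  constructor
  · intro h
    rw [← Submodule.finrank_eq_zero (R := ℝ)]
    omega
  · intro h
    rw [h, finrank_bot] at hrn
    omega

/-- Sign-flipping lemma: if `M` is a `(0,1)`-matrix of rank `m`, `Mλ = 𝟙`, all
coordinates of `λ` are nonzero, and `∑_{i∈I} λ_i < 1`, then `z_I(M)` has rank `m`, its
unique solution `λ'` of `z_I(M)λ' = 𝟙` is `λ'_i = λ_i/(1−∑_{j∈I}λ_j)` for `i ∉ I` and
`λ'_i = −λ_i/(1−∑_{j∈I}λ_j)` for `i ∈ I`; in particular the signs of the coordinates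
indexed by `I` are inverted and the others are preserved. -/
theorem stmt9 (n m : ℕ) (M : Matrix (Fin n) (Fin m) ℝ)
    (h01 : ∀ i j, M i j = 0 ∨ M i j = 1) (hrk : M.rank = m)
    (l : Fin m → ℝ) (hMl : M.mulVec l = 1) (hlne : ∀ i, l i ≠ 0)
    (I : Finset (Fin m)) (hI : ∑ i ∈ I, l i < 1) :
    (zI M I).rank = m ∧
    (zI M I).mulVec
        (fun i => if i ∈ I then -l i / (1 - ∑ j ∈ I, l j)
          else l i / (1 - ∑ j ∈ I, l j)) = 1 ∧
    (∀ x : Fin m → ℝ, (zI M I).mulVec x = 1 →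
        x = fun i => if i ∈ I then -l i / (1 - ∑ j ∈ I, l j)
          else l i / (1 - ∑ j ∈ I, l j)) ∧
    (∀ i ∈ I, (if i ∈ I then -l i / (1 - ∑ j ∈ I, l j)
          else l i / (1 - ∑ j ∈ I, l j)) * l i < 0) ∧
    (∀ i ∉ I, 0 < (if i ∈ I then -l i / (1 - ∑ j ∈ I, l j)
          else l i / (1 - ∑ j ∈ I, l j)) * l i) := by
  set s := ∑ j ∈ I, l j with hs
  have hc : (0:ℝ) < 1 - s := by linarith
  have hcne : (1:ℝ) - s ≠ 0 := ne_of_gt hc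
  have hinj : Function.Injective M.mulVec := (rank_eq_iff_inj M).mp hrk
  -- key identity
  have hkey : ∀ x : Fin m → ℝ, (zI M I).mulVec x
      = M.mulVec (fun j => (∑ k ∈ I, x k) * l j + (if j ∈ I then -x j else x j)) := by
    intro x
    funext i
    simp only [Matrix.mulVec, dotProduct, zI]
    have h1 : ∀ j, (if j ∈ I then 1 - M i j else M i j) * x j
        = (if j ∈ I then x j else 0) + M i j * (if j ∈ I then -x j else x j) := by
      intro j; split <;> ring
    have h2 : ∀ j, M i j * ((∑ k ∈ I, x k) * l j + (if j ∈ I then -x j else x j))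
        = (∑ k ∈ I, x k) * (M i j * l j) + M i j * (if j ∈ I then -x j else x j) := by
      intro j; ring
    rw [Finset.sum_congr rfl fun j _ => h1 j, Finset.sum_congr rfl fun j _ => h2 j,
      Finset.sum_add_distrib, Finset.sum_add_distrib, ← Finset.mul_sum]
    congr 1
    have hMl' : ∑ j, M i j * l j = 1 := by
      have := congrFun hMl i
      simpa [Matrix.mulVec, dotProduct] using this
    rw [hMl', mul_one, Finset.sum_ite_mem, Finset.univ_inter]
  -- injectivity of zI
  have hzinj : Function.Injective (zI M I).mulVec := by
    have hker : ∀ x : Fin m → ℝ, (zI M I).mulVec x = 0 → x = 0 := by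
      intro x hx
      rw [hkey] at hx
      have h0 : M.mulVec (0 : Fin m → ℝ) = 0 := Matrix.mulVec_zero M
      have hv := hinj (hx.trans h0.symm)
      set t := ∑ k ∈ I, x k with ht
      have hvj : ∀ j, t * l j + (if j ∈ I then -x j else x j) = 0 := fun j => congrFun hv j
      have htt : t = 0 := by
        have : ∑ j ∈ I, (t * l j + (if j ∈ I then -x j else x j)) = 0 := by
          simp [hvj]
        rw [Finset.sum_add_distrib, ← Finset.mul_sum, ← hs] at this
        have h3 : ∑ j ∈ I, (if j ∈ I then -x j else x j) = -t := by
          rw [ht, ← Finset.sum_neg_distrib]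
          exact Finset.sum_congr rfl fun j hj => if_pos hj
        rw [h3] at this
        have : t * (s - 1) = 0 := by linarith
        rcases mul_eq_zero.mp this with h | h
        · exact h
        · exact absurd h (by intro h'; linarith)
      funext j
      have := hvj j
      rw [htt, zero_mul, zero_add] at this
      by_cases hj : j ∈ I
      · simp only [if_pos hj, neg_eq_zero] at this; simpa using this
      · simpa [if_neg hj] using this
    intro x y hxy
    have : (zI M I).mulVec (x - y) = 0 := by
      rw [Matrix.mulVec_sub, hxy, sub_self]
    have := hker _ this
    exact sub_eq_zero.mp this
  set l' : Fin m → ℝ := fun i => if i ∈ I then -l i / (1 - s) else l i / (1 - s) with hl'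
  have hmain : (zI M I).mulVec l' = 1 := by
    rw [hkey]
    have hsum : ∑ k ∈ I, l' k = -s / (1 - s) := by
      rw [hl']
      simp only
      rw [Finset.sum_congr rfl fun k hk => if_pos hk]
      rw [hs, ← Finset.sum_div, ← Finset.sum_neg_distrib]
    have : (fun j => (∑ k ∈ I, l' k) * l j + (if j ∈ I then -l' j else l' j)) = l := by
      funext j
      rw [hsum, hl']
      by_cases hj : j ∈ I <;> simp only [if_pos, if_neg, hj, if_true, if_false] <;>
        field_simp <;> ring
    rw [this, hMl]
  refine ⟨(rank_eq_iff_inj _).mpr hzinj, hmain, ?_, ?_, ?_⟩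
  · intro x hx
    exact hzinj (hx.trans hmain.symm)
  · intro i hi
    simp only [if_pos hi]
    rw [div_mul_eq_mul_div, neg_mul]
    exact div_neg_of_neg_of_pos (neg_lt_zero.mpr (mul_self_pos.mpr (hlne i))) hc
  · intro i hi
    simp only [if_neg hi]
    rw [div_mul_eq_mul_div]
    exact div_pos (mul_self_pos.mpr (hlne i)) hc
end

section
/- Let M be an n×m (0,1)-matrix of rank m with Mλ = 𝟙. If I ⊆ [m] satisfies Σ_{i∈I} λ_i = 1, then the matrix z_I(M), obtained by complementing the columns indexed by I, has rank strictly less than m. -/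
/-! Complementing column `j` turns its contribution `a_{*j} λ_j` into `λ_j 𝟙 − a_{*j} λ_j`; so if the
coefficients in `I` are kept and the others negated, `z_I(M)` sends the vector to
`(∑_{i∈I} λ_i) 𝟙 − Mλ`, which vanishes under both hypotheses. A nonzero kernel vector then
forces the rank below the number of columns. -/

open Matrix

theorem Matrix.rank_lt_card_width_of_mulVec_eq_zero {K m n : Type*} [Field K] [Fintype n]
    {A : Matrix m n K} {v : n → K} (hv : v ≠ 0) (hAv : A *ᵥ v = 0) :
    A.rank < Fintype.card n := by
  have hker : 0 < Module.finrank K (LinearMap.ker A.mulVecLin) :=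
    Module.finrank_pos_iff_exists_ne_zero.mpr ⟨⟨v, hAv⟩, fun h => hv (congrArg Subtype.val h)⟩
  have hrank_nullity := LinearMap.finrank_range_add_finrank_ker A.mulVecLin
  rw [Module.finrank_fintype_fun_eq_card] at hrank_nullity
  exact Nat.lt_of_lt_of_eq (Nat.lt_add_of_pos_right hker) hrank_nullity

def signFlip {ι R : Type*} [DecidableEq ι] [Neg R] (I : Finset ι) (l : ι → R) : ι → R :=
  fun j => if j ∈ I then l j else -l j

theorem zI_mulVec_signFlip {n m : ℕ} (M : Matrix (Fin n) (Fin m) ℝ) (I : Finset (Fin m))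
    (l : Fin m → ℝ) :
    zI M I *ᵥ signFlip I l = (fun _ => ∑ j ∈ I, l j) - M *ᵥ l := by
  funext i
  have hentry : ∀ j, zI M I i j * signFlip I l j = (if j ∈ I then l j else 0) - M i j * l j := by
    intro j
    by_cases hj : j ∈ I
    · simp only [zI, signFlip, hj, if_true]; ring
    · simp only [zI, signFlip, hj, if_false]; ring
  simp only [Matrix.mulVec, dotProduct, hentry, Finset.sum_sub_distrib, Finset.sum_ite_mem,
    Finset.univ_inter, Pi.sub_apply]

theorem signFlip_ne_zero {ι R : Type*} [DecidableEq ι] [AddCommGroup R] {I : Finset ι} {l : ι → R}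
    (hI : ∑ i ∈ I, l i ≠ 0) : signFlip I l ≠ 0 := by
  intro h
  refine hI (Finset.sum_eq_zero fun j hj => ?_)
  simpa [signFlip, hj] using congrFun h j

theorem stmt10_general (n m : ℕ) (M : Matrix (Fin n) (Fin m) ℝ)
    (l : Fin m → ℝ) (hMl : M.mulVec l = 1)
    (I : Finset (Fin m)) (hI : ∑ i ∈ I, l i = 1) :
    (zI M I).rank < m := by
  have hker : zI M I *ᵥ signFlip I l = 0 := by
    rw [zI_mulVec_signFlip, hMl, hI]
    exact sub_self _
  simpa using Matrix.rank_lt_card_width_of_mulVec_eq_zero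
    (signFlip_ne_zero (by rw [hI]; exact one_ne_zero)) hker

/-- If `M` is a `(0,1)`-matrix of rank `m` with `Mλ = 𝟙` and `∑_{i∈I} λ_i = 1`,
then `z_I(M)` has rank strictly less than `m`. -/
theorem stmt10 (n m : ℕ) (M : Matrix (Fin n) (Fin m) ℝ)
    (h01 : ∀ i j, M i j = 0 ∨ M i j = 1) (hrk : M.rank = m)
    (l : Fin m → ℝ) (hMl : M.mulVec l = 1)
    (I : Finset (Fin m)) (hI : ∑ i ∈ I, l i = 1) :
    (zI M I).rank < m :=
  stmt10_general n m M l hMl I hI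
end

section
/- Let M be an n×m (0,1)-matrix of rank m with n, m > 1 whose unique solution λ of Mλ = 𝟙 has all coordinates strictly positive. Then Σ_{i=1}^m λ_i > 1. -/
/-! If `∑ l ≤ 1`, every row `u` of `M` satisfies `∑ l ≤ u ⬝ᵥ l` with `u` a `(0,1)`-vector and `l > 0`,
which forces `u` to be the all-ones row. Then `M` has rank at most `1 < m`. -/

open Matrix

section ZeroOneVectors

variable {ι R : Type*} [Fintype ι] [Semiring R] [PartialOrder R] [IsStrictOrderedRing R]

theorem dotProduct_lt_sum_of_eq_zero {u l : ι → R} (hu : ∀ j, u j = 0 ∨ u j = 1)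
    (hl : ∀ j, 0 < l j) {j : ι} (hj : u j = 0) : u ⬝ᵥ l < ∑ k, l k := by
  refine Finset.sum_lt_sum (fun k _ => ?_) ⟨j, Finset.mem_univ j, by simpa [hj] using hl j⟩
  rcases hu k with h | h <;> simp [h, (hl k).le]

theorem eq_one_of_sum_le_dotProduct {u l : ι → R} (hu : ∀ j, u j = 0 ∨ u j = 1)
    (hl : ∀ j, 0 < l j) (hle : ∑ k, l k ≤ u ⬝ᵥ l) (j : ι) : u j = 1 :=
  (hu j).resolve_left fun hj => (dotProduct_lt_sum_of_eq_zero hu hl hj).not_ge hle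

end ZeroOneVectors

theorem Matrix.eq_vecMulVec_one_one_of_mulVec_eq_one {ι κ R : Type*} [Fintype κ] [Semiring R]
    [PartialOrder R] [IsStrictOrderedRing R] {M : Matrix ι κ R}
    (h01 : ∀ i j, M i j = 0 ∨ M i j = 1) {l : κ → R} (hMl : M *ᵥ l = 1)
    (hl : ∀ j, 0 < l j) (hsum : ∑ k, l k ≤ 1) : M = vecMulVec 1 1 := by
  ext i j
  have hrow : M i ⬝ᵥ l = 1 := congrFun hMl i
  simpa using eq_one_of_sum_le_dotProduct (h01 i) hl (hrow ▸ hsum) j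

theorem stmt11_general (n m : ℕ) (hm : 1 < m)
    (M : Matrix (Fin n) (Fin m) ℝ) (h01 : ∀ i j, M i j = 0 ∨ M i j = 1)
    (hrk : M.rank = m) (l : Fin m → ℝ) (hMl : M.mulVec l = 1)
    (hpos : ∀ i, 0 < l i) :
    1 < ∑ i, l i := by
  by_contra! hsum
  have hrank_le := rank_vecMulVec_le (1 : Fin n → ℝ) (1 : Fin m → ℝ)
  rw [← eq_vecMulVec_one_one_of_mulVec_eq_one h01 hMl hpos hsum, hrk] at hrank_le
  omega

/-- If `M` is an `n × m` `(0,1)`-matrix of rank `m` with `n, m > 1`, and `Mλ = 𝟙`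
with all coordinates of `λ` strictly positive, then `∑ λ_i > 1`. -/
theorem stmt11 (n m : ℕ) (hn : 1 < n) (hm : 1 < m)
    (M : Matrix (Fin n) (Fin m) ℝ) (h01 : ∀ i j, M i j = 0 ∨ M i j = 1)
    (hrk : M.rank = m) (l : Fin m → ℝ) (hMl : M.mulVec l = 1)
    (hpos : ∀ i, 0 < l i) :
    1 < ∑ i, l i :=
  stmt11_general n m hm M h01 hrk l hMl hpos
end

section
/- Let M be an n×m (0,1)-matrix of rank m, with n,m > 1, whose unique solution λ of Mλ = 𝟙 has all coordinates strictly positive. Then the matrix z_{[m]}(M) obtained by complementing all columns of M also has rank m and its unique solution of z_{[m]}(M)x = 𝟙 has all coordinates strictly positive. -/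
/-- The matrix obtained from `M` by complementing every column (`a ↦ 𝟙 − a`). -/
def zAll {n m : ℕ} (M : Matrix (Fin n) (Fin m) ℝ) : Matrix (Fin n) (Fin m) ℝ :=
  fun i j => 1 - M i j

/-!
If `M λ = 𝟙` then `z(M) x = (∑ x) 𝟙 − M x`. Hence `z(M) x = 0` forces `M x = M ((∑ x) λ)`, so
`x = (∑ x) λ`, and summing gives `(∑ x)(∑ λ − 1) = 0`; thus `z(M)` is injective as soon as
`∑ λ ≠ 1`, and then `λ / (∑ λ − 1)` solves `z(M) x = 𝟙`. For a `(0,1)`-matrix with injective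
`mulVec` and at least two columns some entry `M i j` vanishes (otherwise two columns coincide),
and row `i` of `M λ = 𝟙` gives `1 = ∑ M i j λ j < ∑ λ`.
-/

open Matrix Function

theorem Matrix.rank_eq_card_iff_mulVec_injective {K ι κ : Type*} [Field K] [Fintype κ] (M : Matrix ι κ K) :
    M.rank = Fintype.card κ ↔ Injective M.mulVec := by
  rw [mulVec_injective_iff, linearIndependent_iff_card_eq_finrank_span,
    rank_eq_finrank_span_cols, eq_comm]
  rfl

theorem Matrix.col_injective_of_mulVec_injective {R ι κ : Type*} [NonAssocSemiring R]
    [Nontrivial R] [Fintype κ] [DecidableEq κ] {M : Matrix ι κ R} (hM : Injective M.mulVec) :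
    Injective M.col := fun a b hab => by
  have h := hM (by rwa [mulVec_single_one, mulVec_single_one] :
    M *ᵥ Pi.single a (1 : R) = M *ᵥ Pi.single b 1)
  by_contra hne
  simpa [Pi.single_apply, hne] using congrFun h a

theorem Matrix.exists_entry_eq_zero_of_mulVec_injective {R ι κ : Type*} [NonAssocSemiring R]
    [Nontrivial R] [Fintype κ] [DecidableEq κ] [Nontrivial κ] {M : Matrix ι κ R}
    (h01 : ∀ i j, M i j = 0 ∨ M i j = 1) (hM : Injective M.mulVec) : ∃ i j, M i j = 0 := by
  by_contra! hne
  obtain ⟨a, b, hab⟩ := exists_pair_ne κ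
  refine hab (col_injective_of_mulVec_injective hM ?_)
  ext i
  simp only [col_apply, (h01 i a).resolve_left (hne i a), (h01 i b).resolve_left (hne i b)]

theorem Matrix.one_lt_sum_of_mulVec_eq_one {ι κ : Type*} [Fintype κ] {M : Matrix ι κ ℝ}
    (h01 : ∀ i j, M i j = 0 ∨ M i j = 1) {i : ι} {j : κ} (hij : M i j = 0) {l : κ → ℝ}
    (hMl : M *ᵥ l = 1) (hpos : ∀ j, 0 < l j) : 1 < ∑ j, l j :=
  calc 1 = ∑ k, M i k * l k := (congrFun hMl i).symm
    _ < ∑ k, l k := by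
      refine Finset.sum_lt_sum (fun k _ => ?_) ⟨j, Finset.mem_univ j, by simp [hij, hpos j]⟩
      rcases h01 i k with h | h <;> simp [h, (hpos k).le]

section zAll

variable {n m : ℕ} {M : Matrix (Fin n) (Fin m) ℝ}

theorem zAll_mulVec (x : Fin m → ℝ) :
    zAll M *ᵥ x = (∑ j, x j) • 1 - M *ᵥ x := by
  ext i
  simp [zAll, mulVec, dotProduct, sub_mul, Finset.sum_sub_distrib]

theorem zAll_mulVec_injective (hM : Injective M.mulVec) {l : Fin m → ℝ} (hMl : M *ᵥ l = 1)
    (hl : ∑ j, l j ≠ 1) : Injective (zAll M).mulVec := by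
  refine (injective_iff_map_eq_zero (zAll M).mulVecLin).2 fun x hx => ?_
  have hMx : M *ᵥ x = M *ᵥ ((∑ j, x j) • l) := by
    rw [mulVec_smul, hMl, ← sub_eq_zero.1 ((zAll_mulVec x).symm.trans hx)]
  have hxl : x = (∑ j, x j) • l := hM hMx
  have hsum : (∑ j, x j) * ((∑ j, l j) - 1) = 0 := by
    have h : ∑ j, x j = (∑ j, x j) * ∑ j, l j := by
      conv_lhs => rw [hxl]
      simp only [Pi.smul_apply, smul_eq_mul, ← Finset.mul_sum]
    rw [mul_sub_one, ← h, sub_self]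
  rw [hxl, (mul_eq_zero.1 hsum).resolve_right (sub_ne_zero.2 hl), zero_smul]

theorem zAll_mulVec_smul_eq_one {l : Fin m → ℝ} (hMl : M *ᵥ l = 1) (hl : ∑ j, l j ≠ 1) :
    zAll M *ᵥ ((∑ j, l j) - 1)⁻¹ • l = 1 := by
  have hl' : (∑ j, l j) - 1 ≠ 0 := sub_ne_zero.2 hl
  rw [zAll_mulVec, mulVec_smul, hMl]
  ext i
  simp only [Pi.smul_apply, smul_eq_mul, ← Finset.mul_sum, Pi.sub_apply, Pi.one_apply]
  field_simp

end zAll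

theorem stmt12_general (n m : ℕ) (hm : 1 < m)
    (M : Matrix (Fin n) (Fin m) ℝ) (h01 : ∀ i j, M i j = 0 ∨ M i j = 1)
    (hrk : M.rank = m) (l : Fin m → ℝ) (hMl : M.mulVec l = 1)
    (hpos : ∀ i, 0 < l i) :
    (zAll M).rank = m ∧
      ∃ μ : Fin m → ℝ, (zAll M).mulVec μ = 1 ∧
        (∀ x : Fin m → ℝ, (zAll M).mulVec x = 1 → x = μ) ∧ ∀ i, 0 < μ i := by
  have : Nontrivial (Fin m) := Fin.nontrivial_iff_two_le.2 hm
  have hM : Injective M.mulVec := by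
    rwa [← rank_eq_card_iff_mulVec_injective, Fintype.card_fin]
  obtain ⟨i, j, hij⟩ := exists_entry_eq_zero_of_mulVec_injective h01 hM
  have hl : 1 < ∑ j, l j := one_lt_sum_of_mulVec_eq_one h01 hij hMl hpos
  have hz : Injective (zAll M).mulVec := zAll_mulVec_injective hM hMl hl.ne'
  have hsol := zAll_mulVec_smul_eq_one hMl hl.ne'
  refine ⟨by rwa [← rank_eq_card_iff_mulVec_injective, Fintype.card_fin] at hz, _, hsol,
    fun x hx => hz (hx.trans hsol.symm), fun k => ?_⟩
  exact mul_pos (inv_pos.2 (sub_pos.2 hl)) (hpos k)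

/-- If `M` is an `n × m` `(0,1)`-matrix of rank `m` (with `n, m > 1`) whose solution of
`Mλ = 𝟙` is strictly positive, then the matrix obtained by complementing all columns
also has rank `m` and its unique solution of `z_{[m]}(M) x = 𝟙` is strictly positive. -/
theorem stmt12 (n m : ℕ) (hn : 1 < n) (hm : 1 < m)
    (M : Matrix (Fin n) (Fin m) ℝ) (h01 : ∀ i j, M i j = 0 ∨ M i j = 1)
    (hrk : M.rank = m) (l : Fin m → ℝ) (hMl : M.mulVec l = 1)
    (hpos : ∀ i, 0 < l i) :
    (zAll M).rank = m ∧
      ∃ μ : Fin m → ℝ, (zAll M).mulVec μ = 1 ∧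
        (∀ x : Fin m → ℝ, (zAll M).mulVec x = 1 → x = μ) ∧ ∀ i, 0 < μ i :=
  stmt12_general n m hm M h01 hrk l hMl hpos
end

section
/- Let u₁,…,u_m be (0,1)-vectors in ℚⁿ that are linearly independent over ℚ, with n > m. Then there exist at least 2ⁿ − 2^m vectors u ∈ {0,1}ⁿ such that u₁,…,u_m,u are linearly independent over ℚ. -/
open Set Submodule Module Matrix

/-- If `u₁, …, u_m` are `(0,1)`-vectors in `ℚⁿ`, linearly independent over `ℚ`, with
`n > m`, then there are at least `2ⁿ − 2^m` vectors `u ∈ {0,1}ⁿ` such that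
`u₁, …, u_m, u` is linearly independent over `ℚ`. -/
theorem stmt17 (n m : ℕ) (hnm : m < n)
    (u : Fin m → Fin n → ℚ) (h01 : ∀ k i, u k i = 0 ∨ u k i = 1)
    (hind : LinearIndependent ℚ u) :
    2 ^ n - 2 ^ m ≤
      {x : Fin n → ℚ | (∀ i, x i = 0 ∨ x i = 1) ∧
        LinearIndependent ℚ (Fin.snoc u x : Fin (m + 1) → Fin n → ℚ)}.ncard := by
  classical
  set W : Submodule ℚ (Fin n → ℚ) := Submodule.span ℚ (Set.range u) with hW
  set F : Set (Fin n → ℚ) := {x | ∀ i, x i = 0 ∨ x i = 1} with hFdef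
  -- `F` is finite with `2 ^ n` elements
  have eF : (Fin n → Bool) ≃ F :=
    { toFun := fun b => ⟨fun i => if b i then 1 else 0, fun i => by
        by_cases h : b i <;> simp [h]⟩
      invFun := fun x i => decide (x.1 i = 1)
      left_inv := fun b => by funext i; by_cases h : b i <;> simp [h]
      right_inv := fun x => by
        ext i
        rcases x.2 i with h | h <;> simp [h] }
  have hFfin : F.Finite := Set.finite_coe_iff.mp (Finite.of_equiv _ eF)
  have hFcard : F.ncard = 2 ^ n := by
    rw [← Nat.card_coe_set_eq, Nat.card_congr eF.symm]
    simp [Nat.card_eq_fintype_card]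
  -- the columns of the matrix `u` span all of `ℚ^m`
  have hvspan : span ℚ (Set.range (Matrix.of u)ᵀ) = ⊤ := by
    apply Submodule.eq_top_of_finrank_eq
    have h1 : (Matrix.of u).rank = m := by
      simpa using (hind.rank_matrix (M := Matrix.of u))
    rw [Matrix.rank_eq_finrank_span_cols] at h1
    simp
    exact h1
  obtain ⟨t, hts, htspan, htind⟩ := exists_linearIndependent ℚ (Set.range (Matrix.of u)ᵀ)
  rw [hvspan] at htspan
  have htfin : t.Finite := htind.setFinite
  have : Fintype t := htfin.fintype
  have htcard : Fintype.card t = m := by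
    have h2 := finrank_span_set_eq_card htind
    rw [htspan] at h2
    simp only [finrank_top, Set.toFinset_card] at h2
    simpa using h2.symm
  -- choose a preimage coordinate for each element of `t`
  have hg : ∀ w : t, ∃ i : Fin n, ∀ k, u k i = (w : Fin m → ℚ) k := by
    intro w
    obtain ⟨i, hi⟩ := hts w.2
    exact ⟨i, fun k => congrFun hi k⟩
  choose g hgspec using hg
  -- key: an element of `W` vanishing on the coordinates `g w` is zero
  have key : ∀ z ∈ W, (∀ w : t, z (g w) = 0) → z = 0 := by
    intro z hz hz0
    rw [hW, mem_span_range_iff_exists_fun] at hz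
    obtain ⟨c, rfl⟩ := hz
    have hcomb : ∀ w : t, (∑ i, c i • u i) (g w) =
        ∑ k, c k * (w : Fin m → ℚ) k := by
      intro w
      simp [Finset.sum_apply, hgspec w]
    have hφ : ∀ w : t, ∑ k, c k * (w : Fin m → ℚ) k = 0 := by
      intro w; rw [← hcomb w]; exact hz0 w
    -- the functional `z ↦ ∑ c k * z k` vanishes on `t`, hence on `span t = ⊤`
    let φ : (Fin m → ℚ) →ₗ[ℚ] ℚ :=
      { toFun := fun z => ∑ k, c k * z k
        map_add' := by
          intro a b
          simp [mul_add, Finset.sum_add_distrib]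
        map_smul' := by
          intro r a
          simp [Finset.mul_sum]
          ring_nf
          simp [mul_comm, mul_left_comm] }
    have hker : span ℚ t ≤ LinearMap.ker φ := by
      rw [Submodule.span_le]
      intro w hw
      exact hφ ⟨w, hw⟩
    rw [htspan, top_le_iff] at hker
    have hc : ∀ k, c k = 0 := by
      intro k
      have := LinearMap.congr_fun (LinearMap.ker_eq_top.mp hker) (Pi.single k 1)
      simpa [φ, Pi.single_apply, Finset.sum_ite_eq'] using this
    have : c = 0 := funext hc
    simp [this]
  -- the set of (0,1)-vectors in `W` has at most `2^m` elements
  set T : Set (Fin n → ℚ) := F ∩ (W : Set (Fin n → ℚ)) with hT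
  have hTinj : Function.Injective
      (fun x : T => (fun w : t => decide (x.1 (g w) = 1))) := by
    intro x y hxy
    have hxy' : ∀ w : t, x.1 (g w) = y.1 (g w) := by
      intro w
      have h := congrFun hxy w
      simp only [decide_eq_decide] at h
      rcases x.2.1 (g w) with hx | hx <;> rcases y.2.1 (g w) with hy | hy <;>
        simp [hx, hy] at h ⊢ <;> tauto
    have hsub : x.1 - y.1 ∈ W := W.sub_mem x.2.2 y.2.2
    have := key _ hsub (fun w => by simp [hxy' w])
    have := sub_eq_zero.mp this
    exact Subtype.ext this
  have hTfin : T.Finite := hFfin.subset Set.inter_subset_left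
  have hTcard : T.ncard ≤ 2 ^ m := by
    have h3 : Nat.card T ≤ Nat.card (t → Bool) := Nat.card_le_card_of_injective _ hTinj
    have h4 : Nat.card (t → Bool) = 2 ^ m := by
      rw [Nat.card_eq_fintype_card, Fintype.card_fun, Fintype.card_bool, htcard]
    rw [← Nat.card_coe_set_eq]
    omega
  -- assembling
  set A : Set (Fin n → ℚ) := {x : Fin n → ℚ | (∀ i, x i = 0 ∨ x i = 1) ∧
        LinearIndependent ℚ (Fin.snoc u x : Fin (m + 1) → Fin n → ℚ)} with hA
  have hdiff : F \ T ⊆ A := by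
    rintro x ⟨hxF, hxT⟩
    have hxW : x ∉ W := fun hxw => hxT ⟨hxF, hxw⟩
    refine ⟨hxF, ?_⟩
    rw [linearIndependent_fin_snoc]
    exact ⟨hind, hxW⟩
  have hAF : A ⊆ F := fun x hx => hx.1
  calc 2 ^ n - 2 ^ m ≤ F.ncard - T.ncard := by
        rw [hFcard]; exact Nat.sub_le_sub_left hTcard _
    _ = (F \ T).ncard := (Set.ncard_diff Set.inter_subset_left hTfin).symm
    _ ≤ A.ncard := Set.ncard_le_ncard hdiff (hFfin.subset hAF)
end

section
/- Let B_{n,n} denote the number of minimal balanced collections of exactly n subsets of [n]. Then B_{n,n} ≥ (2/(n!·(2ⁿ − n))) · 2^{n²−n} · ∏_{k=1}^{n−1}(1 − 1/2^{n−k}). -/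
/-- `B_{n,m}`: the number of minimal balanced collections of exactly `m` subsets
of `[n]`. -/
noncomputable def B (n m : ℕ) : ℕ :=
  {Φ : Finset (Finset (Fin n)) | Φ.card = m ∧ MinimalBalanced n Φ}.ncard

noncomputable section
open Finset

namespace MBC

variable (n : ℕ)

/-- solution predicate -/
def Sol (C : Fin n → Finset (Fin n)) (x : Fin n → ℝ) : Prop :=
  ∀ i, ∑ j, x j * charVec n (C j) i = 1

def Ind (C : Fin n → Finset (Fin n)) : Prop :=
  LinearIndependent ℝ (fun j => charVec n (C j))

variable {n}

lemma sol_funeq {C : Fin n → Finset (Fin n)} {x : Fin n → ℝ} (h : Sol n C x) :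
    ∑ j, x j • charVec n (C j) = 1 := by
  funext i
  simpa [Finset.sum_apply] using h i

lemma sol_of_funeq {C : Fin n → Finset (Fin n)} {x : Fin n → ℝ}
    (h : ∑ j, x j • charVec n (C j) = 1) : Sol n C x := by
  intro i
  have := congrFun h i
  simpa [Finset.sum_apply] using this

lemma sol_unique {C : Fin n → Finset (Fin n)} {x y : Fin n → ℝ} (hI : Ind n C)
    (hx : Sol n C x) (hy : Sol n C y) : x = y := by
  have h : ∑ j, (x j - y j) • charVec n (C j) = 0 := by
    have := sol_funeq hx
    have h2 := sol_funeq hy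
    simp only [sub_smul, Finset.sum_sub_distrib, this, h2, sub_self]
  funext j
  have := Fintype.linearIndependent_iff.mp hI (fun j => x j - y j) h j
  linarith

lemma ind_span_top {C : Fin n → Finset (Fin n)} (hI : Ind n C) :
    Submodule.span ℝ (Set.range fun j => charVec n (C j)) = ⊤ := by
  cases n with
  | zero => exact Subsingleton.elim _ _
  | succ m =>
    exact hI.span_eq_top_of_card_eq_finrank (by simp)

lemma sol_exists {C : Fin n → Finset (Fin n)} (hI : Ind n C) : ∃ x, Sol n C x := by
  have h1 : (1 : Fin n → ℝ) ∈ Submodule.span ℝ (Set.range fun j => charVec n (C j)) := by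
    rw [ind_span_top hI]; trivial
  rw [Submodule.mem_span_range_iff_exists_fun] at h1
  obtain ⟨c, hc⟩ := h1
  exact ⟨c, sol_of_funeq hc⟩

def colMat (C : Fin n → Finset (Fin n)) : Matrix (Fin n) (Fin n) ℝ :=
  Matrix.of fun i j => charVec n (C j) i

lemma ind_iff_isUnit {C : Fin n → Finset (Fin n)} : Ind n C ↔ IsUnit (colMat C) := by
  rw [← Matrix.linearIndependent_cols_iff_isUnit]
  rfl

lemma rows_injective {C : Fin n → Finset (Fin n)} (hI : Ind n C) :
    Function.Injective (fun i => (fun j => charVec n (C j) i)) := by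
  have h := Matrix.linearIndependent_rows_iff_isUnit.mpr (ind_iff_isUnit.mp hI)
  exact h.injective

/-- flipping (complementing) the columns in `T` -/
def cflip (T : Finset (Fin n)) (C : Fin n → Finset (Fin n)) : Fin n → Finset (Fin n) :=
  fun j => if j ∈ T then (C j)ᶜ else C j

lemma charVec_compl (S : Finset (Fin n)) (i : Fin n) :
    charVec n Sᶜ i = 1 - charVec n S i := by
  simp only [charVec, Finset.mem_compl]
  by_cases h : i ∈ S <;> simp [h]

lemma cflip_cflip (T : Finset (Fin n)) (C : Fin n → Finset (Fin n)) :
    cflip T (cflip T C) = C := by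
  funext j
  simp only [cflip]
  by_cases h : j ∈ T <;> simp [h]

/-- the flipped solution -/
def yflip (T : Finset (Fin n)) (x : Fin n → ℝ) : Fin n → ℝ :=
  fun j => (if j ∈ T then -x j else x j) / (1 - ∑ j ∈ T, x j)

lemma cflip_sol {C : Fin n → Finset (Fin n)} {x : Fin n → ℝ} (hx : Sol n C x)
    (T : Finset (Fin n)) (hs : (1 : ℝ) - ∑ j ∈ T, x j ≠ 0) :
    Sol n (cflip T C) (yflip T x) := by
  intro i
  have key : ∀ j, yflip T x j * charVec n (cflip T C j) i
      = (x j * charVec n (C j) i - (if j ∈ T then x j else 0)) / (1 - ∑ j ∈ T, x j) := by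
    intro j
    by_cases h : j ∈ T
    · simp only [yflip, cflip, h, if_true, charVec_compl]
      field_simp
      ring
    · simp only [yflip, cflip, h, if_false]
      ring
  rw [Finset.sum_congr rfl (fun j _ => key j), ← Finset.sum_div,
    Finset.sum_sub_distrib, hx i]
  have : ∑ j, (if j ∈ T then x j else 0) = ∑ j ∈ T, x j := by
    rw [Finset.sum_ite_mem, Finset.univ_inter]
  rw [this, div_self hs]

lemma cflip_ind {C : Fin n → Finset (Fin n)} {x : Fin n → ℝ} (hI : Ind n C)
    (hx : Sol n C x) (T : Finset (Fin n)) (hs : (1 : ℝ) - ∑ j ∈ T, x j ≠ 0) :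
    Ind n (cflip T C) := by
  apply linearIndependent_of_top_le_span_of_card_eq_finrank _ (by simp)
  set W := Submodule.span ℝ (Set.range fun j => charVec n (cflip T C j)) with hW
  have h1 : (1 : Fin n → ℝ) ∈ W := by
    rw [← sol_funeq (cflip_sol hx T hs)]
    exact Submodule.sum_mem _ fun j _ =>
      Submodule.smul_mem _ _ (Submodule.subset_span ⟨j, rfl⟩)
  have hcols : ∀ j, charVec n (C j) ∈ W := by
    intro j
    by_cases h : j ∈ T
    · have : charVec n (C j) = 1 - charVec n (cflip T C j) := by
        funext i
        simp only [cflip, h, if_true, charVec_compl, Pi.sub_apply, Pi.one_apply]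
        ring
      rw [this]
      exact Submodule.sub_mem _ h1 (Submodule.subset_span ⟨j, rfl⟩)
    · have : charVec n (cflip T C j) = charVec n (C j) := by simp [cflip, h]
      rw [← this]
      exact Submodule.subset_span ⟨j, rfl⟩
  rw [← ind_span_top hI]
  apply Submodule.span_le.mpr
  rintro - ⟨j, rfl⟩
  exact hcols j

variable (n) in
open scoped Classical in
/-- tuples of columns: independent with positive solution -/
def Spos : Finset (Fin n → Finset (Fin n)) :=
  univ.filter fun C => Ind n C ∧ ∃ x, Sol n C x ∧ ∀ j, 0 < x j

variable (n) in
open scoped Classical in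
/-- tuples of columns: independent with nowhere-zero solution -/
def Snz : Finset (Fin n → Finset (Fin n)) :=
  univ.filter fun C => Ind n C ∧ ∃ x, Sol n C x ∧ ∀ j, x j ≠ 0

variable (n) in
open scoped Classical in
/-- the chosen solution -/
def xsol (C : Fin n → Finset (Fin n)) : Fin n → ℝ :=
  if h : ∃ x, Sol n C x then h.choose else 0

lemma xsol_sol {C : Fin n → Finset (Fin n)} (h : ∃ x, Sol n C x) : Sol n C (xsol n C) := by
  rw [xsol, dif_pos h]
  exact h.choose_spec

lemma xsol_eq {C : Fin n → Finset (Fin n)} {x : Fin n → ℝ} (hI : Ind n C) (hx : Sol n C x) :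
    xsol n C = x :=
  sol_unique hI (xsol_sol ⟨x, hx⟩) hx

lemma mem_Spos {C : Fin n → Finset (Fin n)} :
    C ∈ Spos n ↔ Ind n C ∧ ∃ x, Sol n C x ∧ ∀ j, 0 < x j := by
  simp [Spos]

lemma mem_Snz {C : Fin n → Finset (Fin n)} :
    C ∈ Snz n ↔ Ind n C ∧ ∃ x, Sol n C x ∧ ∀ j, x j ≠ 0 := by
  simp [Snz]

lemma Spos_ind {C : Fin n → Finset (Fin n)} (h : C ∈ Spos n) : Ind n C := (mem_Spos.mp h).1

lemma Spos_xsol_pos {C : Fin n → Finset (Fin n)} (h : C ∈ Spos n) :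
    Sol n C (xsol n C) ∧ ∀ j, 0 < xsol n C j := by
  obtain ⟨hI, x, hx, hpos⟩ := mem_Spos.mp h
  rw [xsol_eq hI hx]
  exact ⟨hx, hpos⟩

lemma Snz_xsol_nz {C : Fin n → Finset (Fin n)} (h : C ∈ Snz n) :
    Sol n C (xsol n C) ∧ ∀ j, xsol n C j ≠ 0 := by
  obtain ⟨hI, x, hx, hnz⟩ := mem_Snz.mp h
  rw [xsol_eq hI hx]
  exact ⟨hx, hnz⟩

/-- the row sets have solution-weight exactly 1 -/
lemma row_sum_eq_one {C : Fin n → Finset (Fin n)} {x : Fin n → ℝ} (hx : Sol n C x) (i : Fin n) :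
    ∑ j ∈ univ.filter (fun j => i ∈ C j), x j = 1 := by
  rw [Finset.sum_filter]
  rw [← hx i]
  apply Finset.sum_congr rfl
  intro j _
  simp only [charVec]
  by_cases h : i ∈ C j <;> simp [h]

/-- for a positive solution on at least 2 columns, total weight exceeds 1 -/
lemma total_gt_one {C : Fin n → Finset (Fin n)} {x : Fin n → ℝ} (hn : 2 ≤ n)
    (hI : Ind n C) (hx : Sol n C x) (hpos : ∀ j, 0 < x j) :
    1 < ∑ j, x j := by
  have hcardsum : ∑ j, x j * ((C j).card : ℝ) = (n : ℝ) := by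
    have h1 : ∑ i : Fin n, ∑ j, x j * charVec n (C j) i = (n : ℝ) := by
      rw [Finset.sum_congr rfl fun i _ => hx i]
      simp
    rw [Finset.sum_comm] at h1
    rw [← h1]
    apply Finset.sum_congr rfl
    intro j _
    rw [← Finset.mul_sum]
    congr 1
    simp only [charVec, Finset.sum_ite_mem, Finset.univ_inter, Finset.sum_const,
      nsmul_eq_mul, mul_one]
  have hne : ∃ j₀, C j₀ ≠ Finset.univ := by
    by_contra h
    push_neg at h
    have h01 : (⟨0, by omega⟩ : Fin n) ≠ (⟨1, by omega⟩ : Fin n) := by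
      simp [Fin.ext_iff]
    have := hI.injective (show (fun j => charVec n (C j)) ⟨0, by omega⟩
        = (fun j => charVec n (C j)) ⟨1, by omega⟩ by
      simp only []
      rw [h ⟨0, by omega⟩, h ⟨1, by omega⟩])
    exact h01 this
  obtain ⟨j₀, hj₀⟩ := hne
  have hlt : ∑ j, x j * ((C j).card : ℝ) < ∑ j, x j * (n : ℝ) := by
    apply Finset.sum_lt_sum
    · intro j _
      have : (C j).card ≤ n := by simpa using Finset.card_le_univ (C j)
      have := hpos j
      have hc : ((C j).card : ℝ) ≤ (n : ℝ) := by exact_mod_cast ‹(C j).card ≤ n›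
      nlinarith
    · refine ⟨j₀, Finset.mem_univ _, ?_⟩
      have : (C j₀).card < n := by
        have h1 := Finset.card_lt_card (Finset.ssubset_univ_iff.mpr hj₀)
        simpa using h1
      have hc : ((C j₀).card : ℝ) < (n : ℝ) := by exact_mod_cast this
      have := hpos j₀
      nlinarith
  rw [hcardsum, ← Finset.sum_mul] at hlt
  have hn' : (0 : ℝ) < n := by positivity
  by_contra h
  push_neg at h
  nlinarith

lemma charVec_injective : Function.Injective (charVec n) := by
  intro S S' h
  ext i
  have := congrFun h i
  simp only [charVec] at this
  by_cases hS : i ∈ S <;> by_cases hS' : i ∈ S' <;> simp [hS, hS'] at this ⊢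

lemma col_injective {C : Fin n → Finset (Fin n)} (hI : Ind n C) : Function.Injective C :=
  fun _ _ h => hI.injective (by rw [show charVec n _ = _ from congrArg (charVec n) h])

variable (n) in
open scoped Classical in
def BF : Finset (Finset (Finset (Fin n))) :=
  univ.filter fun Φ => Φ.card = n ∧ MinimalBalanced n Φ

lemma B_eq_BF : B n n = (BF n).card := by
  classical
  rw [B, ← Set.ncard_coe_finset]
  congr 1
  ext Φ
  simp [BF]

lemma toColl_mem_BF {C : Fin n → Finset (Fin n)} (hC : C ∈ Spos n) :
    Finset.image C univ ∈ BF n := by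
  classical
  obtain ⟨hI, x, hx, hpos⟩ := mem_Spos.mp hC
  have hinj := col_injective hI
  have hcard : (Finset.image C univ).card = n := by
    rw [Finset.card_image_of_injective _ hinj, Finset.card_univ, Fintype.card_fin]
  have hsum_image : ∀ g : Finset (Fin n) → ℝ,
      ∑ S ∈ Finset.image C univ, g S = ∑ j, g (C j) := by
    intro g
    rw [Finset.sum_image (fun a _ b _ h => hinj h)]
  refine Finset.mem_filter.mpr ⟨Finset.mem_univ _, hcard, ?_, ?_⟩
  · -- balanced
    refine ⟨fun S => ∑ j ∈ univ.filter (fun j => C j = S), x j, ?_, ?_⟩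
    · intro S hS
      obtain ⟨j₀, _, rfl⟩ := Finset.mem_image.mp hS
      have : univ.filter (fun j => C j = C j₀) = {j₀} := by
        ext j
        simp only [Finset.mem_filter, Finset.mem_univ, true_and, Finset.mem_singleton]
        exact ⟨fun h => hinj h, fun h => by rw [h]⟩
      show 0 < ∑ j ∈ univ.filter (fun j => C j = C j₀), x j
      rw [this, Finset.sum_singleton]
      exact hpos j₀
    · intro i
      rw [hsum_image]
      rw [← hx i]
      apply Finset.sum_congr rfl
      intro j _
      congr 1
      have : univ.filter (fun j' => C j' = C j) = {j} := by
        ext j'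
        simp only [Finset.mem_filter, Finset.mem_univ, true_and, Finset.mem_singleton]
        exact ⟨fun h => hinj h, fun h => by rw [h]⟩
      show (∑ j' ∈ univ.filter (fun j' => C j' = C j), x j') = x j
      rw [this, Finset.sum_singleton]
  · -- minimal
    intro Ψ hΨ ⟨u, hu_pos, hu_sol⟩
    obtain ⟨S₀, hS₀mem, hS₀notin⟩ := Finset.exists_of_ssubset hΨ
    obtain ⟨j₀, _, rfl⟩ := Finset.mem_image.mp hS₀mem
    set yy : Fin n → ℝ := fun j => if C j ∈ Ψ then u (C j) else 0 with hyy
    have hysol : Sol n C yy := by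
      intro i
      have h1 : ∑ j, yy j * charVec n (C j) i
          = ∑ S ∈ Finset.image C univ, (if S ∈ Ψ then u S else 0) * charVec n S i := by
        rw [hsum_image]
      rw [h1, ← Finset.sum_subset hΨ.subset]
      · rw [← hu_sol i]
        apply Finset.sum_congr rfl
        intro S hS
        rw [if_pos hS]
      · intro S _ hS
        rw [if_neg hS, zero_mul]
    have := sol_unique hI hx hysol
    have h0 : yy j₀ = 0 := by simp [hyy, hS₀notin]
    rw [← this] at h0
    exact absurd h0 (ne_of_gt (hpos j₀))

open scoped Classical in
lemma fiber_card_le {Φ : Finset (Finset (Fin n))} (hΦ : Φ.card = n) :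
    ((Spos n).filter fun C => Finset.image C univ = Φ).card ≤ Nat.factorial n := by
  classical
  set fib := (Spos n).filter fun C => Finset.image C univ = Φ with hfib
  have key : ∀ C ∈ fib, ∀ j, C j ∈ Φ := by
    intro C hC j
    obtain ⟨-, h2⟩ := Finset.mem_filter.mp hC
    rw [← h2]
    exact Finset.mem_image_of_mem C (Finset.mem_univ j)
  have : fib.card = Fintype.card {C // C ∈ fib} := (Fintype.card_coe _).symm
  rw [this]
  have hemb : Fintype.card {C // C ∈ fib} ≤ Fintype.card (Fin n ↪ Fin n) := by
    have hmapinj : ∀ C : {C // C ∈ fib},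
        Function.Injective (fun j => Fin.cast hΦ (Φ.equivFin ⟨C.1 j, key C.1 C.2 j⟩)) := by
      intro C j j' h
      have hIC := Spos_ind (Finset.mem_filter.mp C.2).1
      have := Φ.equivFin.injective (Fin.cast_injective hΦ h)
      exact col_injective hIC (Subtype.ext_iff.mp this)
    apply Fintype.card_le_of_injective (fun C => ⟨_, hmapinj C⟩)
    intro C C' h
    apply Subtype.ext
    funext j
    have := congrFun (congrArg (fun (g : Fin n ↪ Fin n) => (g : Fin n → Fin n)) h) j
    have h2 := Φ.equivFin.injective (Fin.cast_injective hΦ this)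
    exact Subtype.ext_iff.mp h2
  calc Fintype.card {C // C ∈ fib} ≤ Fintype.card (Fin n ↪ Fin n) := hemb
    _ = Nat.factorial n := by
        rw [Fintype.card_embedding_eq]
        simp [Nat.descFactorial_self]

lemma stepA : (Spos n).card ≤ Nat.factorial n * B n n := by
  classical
  rw [B_eq_BF]
  apply Finset.card_le_mul_card_image_of_maps_to (f := fun C => Finset.image C univ)
    (fun C hC => toColl_mem_BF hC)
  intro Φ hΦ
  exact fiber_card_le (Finset.mem_filter.mp hΦ).2.1

variable (n) in
open scoped Classical in
def cnt (C : Fin n → Finset (Fin n)) : ℕ :=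
  (univ.filter fun T : Finset (Fin n) => ∑ j ∈ T, xsol n C j < 1).card

open scoped Classical in
lemma stepB1 : (Snz n).card ≤ ∑ C' ∈ Spos n, cnt n C' := by
  classical
  have hcs : ∑ C' ∈ Spos n, cnt n C'
      = ((Spos n).sigma fun C' => univ.filter fun T : Finset (Fin n) =>
          ∑ j ∈ T, xsol n C' j < 1).card := by
    rw [Finset.card_sigma]
    rfl
  rw [hcs]
  set negset : (Fin n → Finset (Fin n)) → Finset (Fin n) :=
    fun C => univ.filter fun j => xsol n C j < 0 with hnegset
  apply Finset.card_le_card_of_injOn (fun C => ⟨cflip (negset C) C, negset C⟩)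
  · -- maps to
    intro C hC
    have hI := (mem_Snz.mp hC).1
    obtain ⟨hsol, hnz⟩ := Snz_xsol_nz hC
    set x := xsol n C with hx
    set T := negset C with hT
    have hmemT : ∀ j, j ∈ T ↔ x j < 0 := by
      intro j; simp [hT, hnegset, hx]
    have hsle : ∑ j ∈ T, x j ≤ 0 :=
      Finset.sum_nonpos fun j hj => le_of_lt ((hmemT j).mp hj)
    have hspos : (0:ℝ) < 1 - ∑ j ∈ T, x j := by linarith
    have hs : (1:ℝ) - ∑ j ∈ T, x j ≠ 0 := ne_of_gt hspos
    have hy := cflip_sol hsol T hs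
    have hIy := cflip_ind hI hsol T hs
    have hypos : ∀ j, 0 < yflip T x j := by
      intro j
      rw [yflip]
      by_cases h : j ∈ T
      · rw [if_pos h]
        have := (hmemT j).mp h
        exact div_pos (by linarith) hspos
      · rw [if_neg h]
        have h1 : ¬ x j < 0 := fun hh => h ((hmemT j).mpr hh)
        have h2 := hnz j
        have : 0 < x j := lt_of_le_of_ne (not_lt.mp h1) (Ne.symm h2)
        exact div_pos this hspos
    have hmemS : cflip T C ∈ Spos n := mem_Spos.mpr ⟨hIy, yflip T x, hy, hypos⟩
    have hxeq : xsol n (cflip T C) = yflip T x := xsol_eq hIy hy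
    rw [Finset.mem_coe, Finset.mem_sigma]
    refine ⟨hmemS, ?_⟩
    rw [Finset.mem_filter]
    refine ⟨Finset.mem_univ _, ?_⟩
    rw [hxeq]
    have hterm : ∀ j ∈ T, yflip T x j = (-x j) / (1 - ∑ j ∈ T, x j) := by
      intro j hj
      rw [yflip, if_pos hj]
    have hsum : ∑ j ∈ T, yflip T x j = (- ∑ j ∈ T, x j) / (1 - ∑ j ∈ T, x j) := by
      rw [Finset.sum_congr rfl hterm, ← Finset.sum_div]
      congr 1
      exact Finset.sum_neg_distrib x
    rw [hsum, div_lt_one hspos]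
    linarith
  · -- injective
    intro C hC D hD h
    have h1 : cflip (negset C) C = cflip (negset D) D := congrArg Sigma.fst h
    have h2 : negset C = negset D := by
      have := congrArg Sigma.snd h
      simpa using this
    calc C = cflip (negset C) (cflip (negset C) C) := (cflip_cflip _ _).symm
      _ = cflip (negset D) (cflip (negset D) D) := by rw [h1, h2]
      _ = D := cflip_cflip _ _

lemma flipU_mem {C : Fin n → Finset (Fin n)} (hn : 2 ≤ n) (hC : C ∈ Spos n) :
    cflip univ C ∈ Spos n ∧
      xsol n (cflip univ C) = yflip univ (xsol n C) := by
  have hI := Spos_ind hC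
  obtain ⟨hsol, hpos⟩ := Spos_xsol_pos hC
  set x := xsol n C with hx
  have hgt := total_gt_one hn hI hsol hpos
  have hneg : 1 - ∑ j, x j < 0 := by linarith
  have hsum_eq : ∑ j ∈ univ, x j = ∑ j, x j := rfl
  have hs : (1:ℝ) - ∑ j ∈ univ, x j ≠ 0 := by rw [hsum_eq]; linarith
  have hy := cflip_sol hsol univ hs
  have hIy := cflip_ind hI hsol univ hs
  have hypos : ∀ j, 0 < yflip univ x j := by
    intro j
    rw [yflip, if_pos (Finset.mem_univ j)]
    apply div_pos_of_neg_of_neg _ (by rw [hsum_eq]; linarith)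
    have := hpos j
    linarith
  exact ⟨mem_Spos.mpr ⟨hIy, yflip univ x, hy, hypos⟩, xsol_eq hIy hy⟩

open scoped Classical in
lemma cnt_flipU {C : Fin n → Finset (Fin n)} (hn : 2 ≤ n) (hC : C ∈ Spos n) :
    cnt n (cflip univ C)
      = (univ.filter fun U : Finset (Fin n) => 1 < ∑ j ∈ U, xsol n C j).card := by
  classical
  obtain ⟨hmem, hxeq⟩ := flipU_mem hn hC
  obtain ⟨hsol, hpos⟩ := Spos_xsol_pos hC
  have hI := Spos_ind hC
  set x := xsol n C with hx
  have hgt := total_gt_one hn hI hsol hpos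
  have hneg : 1 - ∑ j, x j < 0 := by linarith
  have hiff : ∀ T : Finset (Fin n),
      (∑ j ∈ T, xsol n (cflip univ C) j < 1) ↔ 1 < ∑ j ∈ Tᶜ, x j := by
    intro T
    rw [hxeq]
    have hterm : ∀ j ∈ T, yflip univ x j = (-x j) / (1 - ∑ j ∈ univ, x j) := by
      intro j _
      rw [yflip, if_pos (Finset.mem_univ j)]
    have hsum : ∑ j ∈ T, yflip univ x j = (- ∑ j ∈ T, x j) / (1 - ∑ j, x j) := by
      rw [Finset.sum_congr rfl hterm, ← Finset.sum_div]
      congr 1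
      exact Finset.sum_neg_distrib x
    have hcompl : ∑ j ∈ T, x j + ∑ j ∈ Tᶜ, x j = ∑ j, x j :=
      Finset.sum_add_sum_compl T x
    rw [hsum, div_lt_iff_of_neg hneg, one_mul]
    constructor <;> intro h <;> linarith
  rw [cnt]
  refine Finset.card_bij' (fun T _ => Tᶜ) (fun U _ => Uᶜ) ?_ ?_ ?_ ?_
  · intro T hT
    rw [Finset.mem_filter] at hT ⊢
    exact ⟨Finset.mem_univ _, (hiff T).mp hT.2⟩
  · intro U hU
    rw [Finset.mem_filter] at hU ⊢
    refine ⟨Finset.mem_univ _, (hiff Uᶜ).mpr ?_⟩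
    rw [compl_compl]
    exact hU.2
  · intro T _; exact compl_compl T
  · intro U _; exact compl_compl U

open scoped Classical in
lemma eq_one_count {C : Fin n → Finset (Fin n)} (hC : C ∈ Spos n) :
    n ≤ (univ.filter fun T : Finset (Fin n) => ∑ j ∈ T, xsol n C j = 1).card := by
  classical
  have hI := Spos_ind hC
  obtain ⟨hsol, _⟩ := Spos_xsol_pos hC
  have := Finset.card_le_card_of_injOn
    (f := fun i : Fin n => univ.filter fun j => i ∈ C j)
    (s := univ) (t := univ.filter fun T : Finset (Fin n) => ∑ j ∈ T, xsol n C j = 1)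
    (fun i _ => Finset.mem_filter.mpr ⟨Finset.mem_univ _, row_sum_eq_one hsol i⟩)
    ?_
  · simpa using this
  · intro i _ i' _ h
    have h' : (univ.filter fun j => i ∈ C j) = univ.filter fun j => i' ∈ C j := h
    apply rows_injective hI
    funext j
    have hj : i ∈ C j ↔ i' ∈ C j := by
      constructor <;> intro hm
      · have : j ∈ univ.filter fun j => i' ∈ C j := by
          rw [← h']; exact Finset.mem_filter.mpr ⟨Finset.mem_univ _, hm⟩
        exact (Finset.mem_filter.mp this).2
      · have : j ∈ univ.filter fun j => i ∈ C j := by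
          rw [h']; exact Finset.mem_filter.mpr ⟨Finset.mem_univ _, hm⟩
        exact (Finset.mem_filter.mp this).2
    simp only [charVec]
    by_cases hm : i ∈ C j
    · rw [if_pos hm, if_pos (hj.mp hm)]
    · rw [if_neg hm, if_neg (fun hh => hm (hj.mpr hh))]

open scoped Classical in
lemma cnt_add_le {C : Fin n → Finset (Fin n)} (hn : 2 ≤ n) (hC : C ∈ Spos n) :
    cnt n C + cnt n (cflip univ C) ≤ 2 ^ n - n := by
  classical
  rw [cnt_flipU hn hC, cnt]
  set x := xsol n C
  set A := univ.filter fun T : Finset (Fin n) => ∑ j ∈ T, x j < 1 with hA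
  set G := univ.filter fun T : Finset (Fin n) => 1 < ∑ j ∈ T, x j with hG
  set E := univ.filter fun T : Finset (Fin n) => ∑ j ∈ T, x j = 1 with hE
  have hdisj : Disjoint A G := by
    rw [Finset.disjoint_left]
    intro T hTA hTG
    rw [hA, Finset.mem_filter] at hTA
    rw [hG, Finset.mem_filter] at hTG
    exact absurd hTG.2 (not_lt.mpr (le_of_lt hTA.2))
  have hsub : A ∪ G ⊆ Eᶜ := by
    intro T hT
    rw [Finset.mem_compl, hE, Finset.mem_filter]
    rcases Finset.mem_union.mp hT with h | h
    · rw [hA, Finset.mem_filter] at h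
      exact fun hh => absurd hh.2 (ne_of_lt h.2)
    · rw [hG, Finset.mem_filter] at h
      exact fun hh => absurd hh.2 (ne_of_gt h.2)
  have h1 : A.card + G.card ≤ Eᶜ.card := by
    rw [← Finset.card_union_of_disjoint hdisj]
    exact Finset.card_le_card hsub
  have h2 : Eᶜ.card = 2 ^ n - E.card := by
    rw [Finset.card_compl]
    congr 1
    simp [Fintype.card_finset]
  have h3 : n ≤ E.card := eq_one_count hC
  have h4 : E.card ≤ 2 ^ n := by
    calc E.card ≤ Fintype.card (Finset (Fin n)) := Finset.card_le_univ E
      _ = 2 ^ n := by simp [Fintype.card_finset]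
  omega

lemma stepB (hn : 2 ≤ n) : 2 * (Snz n).card ≤ (2 ^ n - n) * (Spos n).card := by
  classical
  have hre : ∑ C ∈ Spos n, cnt n (cflip univ C) = ∑ C ∈ Spos n, cnt n C := by
    apply Finset.sum_nbij' (i := fun C => cflip univ C) (j := fun C => cflip univ C)
    · intro C hC; exact (flipU_mem hn hC).1
    · intro C hC; exact (flipU_mem hn hC).1
    · intro C _; exact cflip_cflip _ _
    · intro C _; exact cflip_cflip _ _
    · intro C _; rfl
  calc 2 * (Snz n).card ≤ 2 * ∑ C ∈ Spos n, cnt n C := by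
        have := stepB1 (n := n)
        omega
    _ = ∑ C ∈ Spos n, cnt n C + ∑ C ∈ Spos n, cnt n (cflip univ C) := by
        rw [hre]; ring
    _ = ∑ C ∈ Spos n, (cnt n C + cnt n (cflip univ C)) := by
        rw [Finset.sum_add_distrib]
    _ ≤ ∑ _C ∈ Spos n, (2 ^ n - n) := Finset.sum_le_sum fun C hC => cnt_add_le hn hC
    _ = (2 ^ n - n) * (Spos n).card := by
        rw [Finset.sum_const, smul_eq_mul, mul_comm]

/-! ### Step C: the `𝔽₂` construction -/

def rho (u : Fin n → ZMod 2) : Finset (Fin n) := univ.filter fun i => u i = 1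

lemma mem_rho {u : Fin n → ZMod 2} {i : Fin n} : i ∈ rho u ↔ u i = 1 := by
  simp [rho]

lemma rho_injective : Function.Injective (rho (n := n)) := by
  intro u u' h
  funext i
  have hz : ∀ a : ZMod 2, a = 0 ∨ a = 1 := by decide
  have h1 : u i = 1 ↔ u' i = 1 := by rw [← mem_rho, ← mem_rho, h]
  rcases hz (u i) with h2 | h2 <;> rcases hz (u' i) with h3 | h3 <;>
    simp [h2, h3] at h1 ⊢

def zmat (w : Fin n → Fin n → ZMod 2) : Matrix (Fin n) (Fin n) (ZMod 2) :=
  Matrix.of fun i j => w j i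

def imat (C : Fin n → Finset (Fin n)) : Matrix (Fin n) (Fin n) ℤ :=
  Matrix.of fun i j => if i ∈ C j then 1 else 0

lemma imat_map_real (C : Fin n → Finset (Fin n)) :
    (imat C).map (Int.cast : ℤ → ℝ) = colMat C := by
  ext i j
  simp [imat, colMat, charVec, apply_ite (Int.cast : ℤ → ℝ)]

lemma imat_map_zmod (w : Fin n → Fin n → ZMod 2) :
    (imat fun j => rho (w j)).map (Int.cast : ℤ → ZMod 2) = zmat w := by
  ext i j
  have hz : ∀ a : ZMod 2, (if a = 1 then (1 : ZMod 2) else 0) = a := by decide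
  simp only [imat, zmat, Matrix.map_apply, Matrix.of_apply, mem_rho,
    apply_ite (Int.cast : ℤ → ZMod 2), Int.cast_one, Int.cast_zero]
  exact hz (w j i)

lemma det_map_int {R : Type*} [CommRing R] (M : Matrix (Fin n) (Fin n) ℤ) :
    (M.map (Int.cast : ℤ → R)).det = ((M.det : ℤ) : R) := by
  rw [show (M.map (Int.cast : ℤ → R)) = (Int.castRingHom R).mapMatrix M by
    rw [RingHom.mapMatrix_apply, Int.coe_castRingHom]]
  exact (RingHom.map_det _ M).symm

lemma zmat_isUnit_det {w : Fin n → Fin n → ZMod 2}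
    (hw : LinearIndependent (ZMod 2) w) : IsUnit (zmat w).det := by
  rw [← Matrix.isUnit_iff_isUnit_det]
  exact Matrix.linearIndependent_cols_iff_isUnit.mp hw

lemma int_det_cast_ne_zero {M : Matrix (Fin n) (Fin n) ℤ}
    (h : IsUnit (M.map (Int.cast : ℤ → ZMod 2)).det) :
    ((M.det : ℤ) : ℝ) ≠ 0 := by
  have h1 : ((M.det : ℤ) : ZMod 2) ≠ 0 := by
    rw [← det_map_int]
    exact h.ne_zero
  have h2 : M.det ≠ 0 := fun hz => h1 (by rw [hz]; simp)
  exact_mod_cast h2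

lemma ind_of_zmod {w : Fin n → Fin n → ZMod 2}
    (hw : LinearIndependent (ZMod 2) w) : Ind n (fun j => rho (w j)) := by
  rw [ind_iff_isUnit, Matrix.isUnit_iff_isUnit_det, isUnit_iff_ne_zero]
  rw [← imat_map_real, det_map_int]
  exact int_det_cast_ne_zero (by rw [imat_map_zmod]; exact zmat_isUnit_det hw)

lemma mem_Snz_of_zmod {w : Fin n → Fin n → ZMod 2}
    (hw : LinearIndependent (ZMod 2) w)
    (hupd : ∀ j, LinearIndependent (ZMod 2) (Function.update w j 1)) :
    (fun j => rho (w j)) ∈ Snz n := by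
  classical
  set C : Fin n → Finset (Fin n) := fun j => rho (w j) with hC
  have hI : Ind n C := ind_of_zmod hw
  obtain ⟨x, hx⟩ := sol_exists hI
  refine mem_Snz.mpr ⟨hI, x, hx, ?_⟩
  intro j
  set A := colMat C with hA
  have hU : IsUnit A := ind_iff_isUnit.mp hI
  have hmv : A.mulVec x = 1 := by
    funext i
    show ∑ j', A i j' * x j' = (1 : Fin n → ℝ) i
    rw [Pi.one_apply, ← hx i]
    exact Finset.sum_congr rfl fun j' _ => mul_comm _ _
  -- Cramer's rule
  have hcr : Matrix.cramer A 1 = A.det • x := by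
    apply Matrix.mulVec_injective_iff_isUnit.mpr hU
    rw [Matrix.mulVec_cramer, Matrix.mulVec_smul, hmv]
  -- the numerator determinant is nonzero
  have hnum : Matrix.cramer A 1 j ≠ 0 := by
    rw [Matrix.cramer_apply]
    show (A.updateCol j fun _ => (1:ℝ)).det ≠ 0
    have hu1 : A.updateCol j (fun _ => 1)
        = ((imat C).updateCol j fun _ => (1 : ℤ)).map (Int.cast : ℤ → ℝ) := by
      rw [hA, ← imat_map_real]
      ext i k
      by_cases hk : k = j <;>
        simp [Matrix.updateCol_apply, Matrix.map_apply, hk]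
    rw [hu1, det_map_int]
    apply int_det_cast_ne_zero
    have hu2 : ((imat C).updateCol j fun _ => (1 : ℤ)).map (Int.cast : ℤ → ZMod 2)
        = (zmat w).updateCol j (fun _ => 1) := by
      rw [← imat_map_zmod w]
      ext i k
      by_cases hk : k = j <;>
        simp [Matrix.updateCol_apply, Matrix.map_apply, hk, hC]
    rw [hu2]
    have hcols : Matrix.transpose ((zmat w).updateCol j fun _ => (1 : ZMod 2))
        = Matrix.of (Function.update w j 1) := by
      ext k i
      rw [Matrix.transpose_apply, Matrix.updateCol_apply, Matrix.of_apply,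
        Function.update_apply]
      by_cases hk : k = j <;> simp [hk, zmat]
    rw [← Matrix.isUnit_iff_isUnit_det, ← Matrix.isUnit_transpose, hcols]
    rw [Matrix.isUnit_iff_isUnit_det, ← Matrix.isUnit_iff_isUnit_det]
    exact Matrix.linearIndependent_rows_iff_isUnit.mp (hupd j)
  intro h0
  rw [hcr] at hnum
  simp [h0] at hnum

section Construction

variable {m : ℕ}

lemma upd_indep {w : Fin (m+1) → (Fin (m+1) → ZMod 2)}
    (hw : LinearIndependent (ZMod 2) w) (hsum : ∑ k, w k = 1) (j : Fin (m+1)) :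
    LinearIndependent (ZMod 2) (Function.update w j 1) := by
  classical
  apply linearIndependent_of_top_le_span_of_card_eq_finrank _ (by simp)
  have hspan : Submodule.span (ZMod 2) (Set.range w) = ⊤ :=
    hw.span_eq_top_of_card_eq_finrank (by simp)
  rw [← hspan]
  apply Submodule.span_le.mpr
  rintro - ⟨k, rfl⟩
  set W := Submodule.span (ZMod 2) (Set.range (Function.update w j 1)) with hW
  have h1 : (1 : Fin (m+1) → ZMod 2) ∈ W :=
    Function.update_self j 1 w ▸ Submodule.subset_span ⟨j, rfl⟩
  by_cases hk : k = j
  · subst hk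
    have hwk : w k = 1 - ∑ l ∈ univ.erase k, w l := by
      have h := Finset.add_sum_erase univ w (Finset.mem_univ k)
      rw [hsum] at h
      exact eq_sub_of_add_eq h
    rw [hwk]
    apply Submodule.sub_mem _ h1
    apply Submodule.sum_mem
    intro l hl
    have hlj : l ≠ k := (Finset.mem_erase.mp hl).1
    rw [← Function.update_of_ne hlj 1 w]
    exact Submodule.subset_span ⟨l, rfl⟩
  · rw [← Function.update_of_ne hk 1 w]
    exact Submodule.subset_span ⟨k, rfl⟩

lemma add_self_zmod2 (a : Fin (m+1) → ZMod 2) : a + a = 0 := by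
  funext i
  have : ∀ b : ZMod 2, b + b = 0 := by decide
  simp [this]

lemma snocw_indep {v : Fin m → (Fin (m+1) → ZMod 2)}
    (hv : LinearIndependent (ZMod 2) (Fin.cons 1 v : Fin (m+1) → Fin (m+1) → ZMod 2)) :
    LinearIndependent (ZMod 2) (Fin.snoc v (1 + ∑ j, v j) : Fin (m+1) → Fin (m+1) → ZMod 2) := by
  obtain ⟨hv', hone⟩ := linearIndependent_fin_cons.mp hv
  refine linearIndependent_fin_snoc.mpr ⟨hv', ?_⟩
  intro hmem
  apply hone
  have h1 : (1 : Fin (m+1) → ZMod 2) = (1 + ∑ j, v j) - ∑ j, v j := by ring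
  rw [h1]
  exact Submodule.sub_mem _ hmem
    (Submodule.sum_mem _ fun j _ => Submodule.subset_span ⟨j, rfl⟩)

lemma snocw_sum {v : Fin m → (Fin (m+1) → ZMod 2)} :
    ∑ k, (Fin.snoc v (1 + ∑ j, v j) : Fin (m+1) → Fin (m+1) → ZMod 2) k = 1 := by
  rw [Fin.sum_univ_castSucc]
  simp only [Fin.snoc_castSucc, Fin.snoc_last]
  have : ∑ j, v j + (1 + ∑ j, v j) = 1 + (∑ j, v j + ∑ j, v j) := by ring
  rw [this, add_self_zmod2, add_zero]

lemma cons_eq_snoc {k : ℕ} {α : Type*} (a : α) (w : Fin (k+1) → α) :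
    (Fin.cons a w : Fin (k+2) → α)
      = Fin.snoc (Fin.cons a (Fin.init w)) (w (Fin.last k)) := by
  conv_lhs => rw [← Fin.snoc_init_self w]
  rw [Fin.cons_snoc_eq_snoc_cons]

variable (m) in
open scoped Classical in
def Dk (k : ℕ) : Finset (Fin k → (Fin (m+1) → ZMod 2)) :=
  univ.filter fun v =>
    LinearIndependent (ZMod 2) (Fin.cons 1 v : Fin (k+1) → Fin (m+1) → ZMod 2)

lemma cardDk : ∀ k, k ≤ m → (Dk m k).card = ∏ i ∈ Icc 1 k, (2^(m+1) - 2^i) := by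
  intro k
  induction k with
  | zero =>
    intro _
    rw [show Icc 1 0 = (∅ : Finset ℕ) by rfl, Finset.prod_empty]
    have hall : Dk m 0 = univ := by
      ext v
      simp only [Dk, Finset.mem_filter, Finset.mem_univ, true_and, iff_true]
      refine linearIndependent_fin_cons.mpr ⟨linearIndependent_empty_type, ?_⟩
      have hr : Set.range v = ∅ := by
        simp [Set.range_eq_empty]
      rw [hr]
      simp only [Submodule.span_empty, Submodule.mem_bot]
      intro h
      have := congrFun h 0
      simp at this
    rw [hall, Finset.card_univ]
    simp
  | succ k ih =>
    intro hk1
    have hk : k ≤ m := le_of_lt hk1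
    classical
    have hmaps : ∀ w ∈ Dk m (k+1), Fin.init w ∈ Dk m k := by
      intro w hw
      rw [Dk, Finset.mem_filter] at hw ⊢
      refine ⟨Finset.mem_univ _, ?_⟩
      have := hw.2
      rw [cons_eq_snoc] at this
      exact (linearIndependent_fin_snoc.mp this).1
    have hfib : ∀ v ∈ Dk m k,
        ((Dk m (k+1)).filter fun w => Fin.init w = v).card = 2^(m+1) - 2^(k+1) := by
      intro v hv
      rw [Dk, Finset.mem_filter] at hv
      have hvi := hv.2
      set Wsp := Submodule.span (ZMod 2)
        (Set.range (Fin.cons 1 v : Fin (k+1) → Fin (m+1) → ZMod 2)) with hWsp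
      have hbij : ((Dk m (k+1)).filter fun w => Fin.init w = v).card
          = (univ.filter fun u : Fin (m+1) → ZMod 2 => u ∉ Wsp).card := by
        refine Finset.card_nbij' (fun w => w (Fin.last k)) (fun u => Fin.snoc v u)
          ?_ ?_ ?_ ?_
        · intro w hw
          rw [Finset.mem_coe, Finset.mem_filter] at hw
          obtain ⟨hw1, hw2⟩ := hw
          rw [Dk, Finset.mem_filter] at hw1
          have := hw1.2
          rw [cons_eq_snoc] at this
          have h2 := (linearIndependent_fin_snoc.mp this).2
          rw [hw2] at h2
          exact Finset.mem_filter.mpr ⟨Finset.mem_univ _, h2⟩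
        · intro u hu
          rw [Finset.mem_coe, Finset.mem_filter] at hu
          refine Finset.mem_filter.mpr ⟨?_, Fin.init_snoc _ _⟩
          rw [Dk, Finset.mem_filter]
          refine ⟨Finset.mem_univ _, ?_⟩
          rw [cons_eq_snoc]
          simp only [Fin.init_snoc, Fin.snoc_last]
          exact linearIndependent_fin_snoc.mpr ⟨hvi, hu.2⟩
        · intro w hw
          rw [Finset.mem_coe, Finset.mem_filter] at hw
          rw [← hw.2]
          exact Fin.snoc_init_self w
        · intro u _
          exact Fin.snoc_last _ _
      rw [hbij]
      have hsubcard : (univ.filter fun u : Fin (m+1) → ZMod 2 => u ∈ Wsp).card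
          = 2^(k+1) := by
        rw [← Fintype.card_subtype]
        have hfr : Module.finrank (ZMod 2) Wsp = k + 1 := by
          rw [hWsp, finrank_span_eq_card hvi]
          simp
        rw [Module.card_eq_pow_finrank (K := ZMod 2) (V := Wsp), hfr]
        simp
      have hcompl := Finset.card_filter_add_card_filter_not
        (s := (univ : Finset (Fin (m+1) → ZMod 2))) (p := fun u => u ∈ Wsp)
      rw [hsubcard] at hcompl
      have huniv : (univ : Finset (Fin (m+1) → ZMod 2)).card = 2^(m+1) := by
        rw [Finset.card_univ]
        simp [ZMod.card]
      omega
    rw [Finset.card_eq_sum_card_fiberwise hmaps,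
      Finset.sum_congr rfl hfib, Finset.sum_const, smul_eq_mul,
      ih hk, Finset.prod_Icc_succ_top (Nat.le_add_left 1 k), mul_comm]

end Construction

lemma stepC {m : ℕ} :
    ∏ i ∈ Icc 1 m, (2^(m+1) - 2^i) ≤ (Snz (m+1)).card := by
  classical
  rw [← cardDk (m := m) m le_rfl]
  apply Finset.card_le_card_of_injOn
    (f := fun v => fun j => rho ((Fin.snoc v (1 + ∑ l, v l) : Fin (m+1) → _) j))
  · intro v hv
    rw [Dk, Finset.mem_coe, Finset.mem_filter] at hv
    have hw := snocw_indep hv.2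
    have hsum := snocw_sum (v := v)
    exact mem_Snz_of_zmod hw fun j => upd_indep hw hsum j
  · intro v _ v' _ h
    funext j
    have h1 := congrFun h (Fin.castSucc j)
    have h2 := rho_injective h1
    rwa [Fin.snoc_castSucc, Fin.snoc_castSucc] at h2

lemma key_prod (m : ℕ) :
    (2:ℝ)^((m+1)^2-(m+1)) * ∏ k ∈ Icc 1 m, (1 - 1/(2:ℝ)^((m+1)-k))
      = ((∏ i ∈ Icc 1 m, (2^(m+1) - 2^i) : ℕ) : ℝ) := by
  have hcast : ((∏ i ∈ Icc 1 m, (2^(m+1) - 2^i) : ℕ) : ℝ)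
      = ∏ i ∈ Icc 1 m, ((2:ℝ)^(m+1) - 2^i) := by
    rw [Nat.cast_prod]
    apply Finset.prod_congr rfl
    intro i hi
    have hile : i ≤ m + 1 := by
      have := (Finset.mem_Icc.mp hi).2
      omega
    rw [Nat.cast_sub (Nat.pow_le_pow_right (by norm_num) hile)]
    push_cast
    ring
  rw [hcast]
  have hexp : (m+1)^2 - (m+1) = (m+1)*m := by
    have : (m+1)^2 = (m+1)*m + (m+1) := by ring
    omega
  rw [hexp, pow_mul]
  have hconst : ((2:ℝ)^(m+1))^m = ∏ _k ∈ Icc 1 m, (2:ℝ)^(m+1) := by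
    rw [Finset.prod_const, Nat.card_Icc]
    simp
  rw [hconst, ← Finset.prod_mul_distrib]
  apply Finset.prod_congr rfl
  intro k hk
  obtain ⟨hk1, hk2⟩ := Finset.mem_Icc.mp hk
  have h2 : (2:ℝ)^(m+1) = 2^k * 2^(m+1-k) := by
    rw [← pow_add]
    congr 1
    omega
  have hne : (2:ℝ)^(m+1-k) ≠ 0 := by positivity
  field_simp
  rw [h2]
  ring

end MBC

/-- Lower bound:
`B_{n,n} ≥ (2/(n!·(2ⁿ − n))) · 2^{n²−n} · ∏_{k=1}^{n−1}(1 − 1/2^{n−k})`. -/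
theorem stmt19 (n : ℕ) (hn : 2 ≤ n) :
    (2 / ((Nat.factorial n : ℝ) * ((2 : ℝ) ^ n - (n : ℝ)))) * (2 : ℝ) ^ (n ^ 2 - n) *
        ∏ k ∈ Finset.Icc 1 (n - 1), (1 - 1 / (2 : ℝ) ^ (n - k)) ≤
      (B n n : ℝ) := by
  classical
  obtain ⟨m, rfl⟩ : ∃ m, n = m + 1 := ⟨n - 1, by omega⟩
  have hltn : (m + 1) < 2 ^ (m + 1) := Nat.lt_two_pow_self
  have hle : (m + 1) ≤ 2 ^ (m + 1) := le_of_lt hltn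
  set N : ℕ := ∏ i ∈ Finset.Icc 1 m, (2 ^ (m + 1) - 2 ^ i) with hN
  have hchain : 2 * N ≤ (2 ^ (m + 1) - (m + 1)) * (Nat.factorial (m + 1) * B (m + 1) (m + 1)) := by
    have h1 : N ≤ (MBC.Snz (m + 1)).card := MBC.stepC
    have h2 := MBC.stepB (n := m + 1) hn
    have h3 := MBC.stepA (n := m + 1)
    calc 2 * N ≤ 2 * (MBC.Snz (m + 1)).card := by omega
      _ ≤ (2 ^ (m + 1) - (m + 1)) * (MBC.Spos (m + 1)).card := h2
      _ ≤ (2 ^ (m + 1) - (m + 1)) * (Nat.factorial (m + 1) * B (m + 1) (m + 1)) :=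
          Nat.mul_le_mul_left _ h3
  have hm1 : m + 1 - 1 = m := rfl
  rw [hm1]
  have hkey := MBC.key_prod m
  rw [mul_assoc, hkey, ← hN]
  have hpow : ((m : ℝ) + 1) < (2 : ℝ) ^ (m + 1) := by exact_mod_cast hltn
  have hFK : (0 : ℝ) < (Nat.factorial (m + 1) : ℝ) * ((2 : ℝ) ^ (m + 1) - ((m : ℝ) + 1)) := by
    apply mul_pos
    · exact_mod_cast Nat.factorial_pos (m + 1)
    · linarith
  have hcastmn : ((m + 1 : ℕ) : ℝ) = (m : ℝ) + 1 := by push_cast; ring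
  rw [hcastmn, div_mul_eq_mul_div, div_le_iff₀ hFK]
  have hchainR : 2 * (N : ℝ)
      ≤ ((2 : ℝ) ^ (m + 1) - ((m : ℝ) + 1)) * ((Nat.factorial (m + 1) : ℝ) * (B (m + 1) (m + 1) : ℝ)) := by
    have : ((2 * N : ℕ) : ℝ) ≤ (((2 ^ (m + 1) - (m + 1)) * (Nat.factorial (m + 1) * B (m + 1) (m + 1)) : ℕ) : ℝ) := Nat.cast_le.mpr hchain
    push_cast [Nat.cast_sub hle] at this
    convert this using 2 <;> push_cast <;> ring
  nlinarith [hchainR]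
end
end
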